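/- arXiv:2202.06611 — 2 statements merged into one kernel-verified Lean document; each statement's English description precedes it below -/
import Mathlib

section
/- Fundamental diagonal Möbius identity: for 0 < λ < 1, b = (1-λ)/(1+λ), and every x on the unit circle, M(S(x); λ) = S(L(x; b)), where S(x) = (x₁²-x₂², 2x₁x₂), L(x;b) = (x₁, bx₂)/√(x₁²+b²x₂²), and M(y;λ) = (2λ + (1+λ²)y₁, (1-λ²)y₂)/(1+λ²+2λy₁). -/
/-- Squaring (angle-doubling) map on ℝ². -/
def circSquare (x : ℝ × ℝ) : ℝ × ℝ := (x.1 ^ 2 - x.2 ^ 2, 2 * x.1 * x.2)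

/-- Rescaled diagonal linear transformation. -/
noncomputable def rescaledLinear (x : ℝ × ℝ) (b : ℝ) : ℝ × ℝ :=
  (x.1 / Real.sqrt (x.1 ^ 2 + b ^ 2 * x.2 ^ 2),
   b * x.2 / Real.sqrt (x.1 ^ 2 + b ^ 2 * x.2 ^ 2))

/-- Diagonal Möbius transformation. -/
noncomputable def diagMobius (y : ℝ × ℝ) (lam : ℝ) : ℝ × ℝ :=
  ((2 * lam + (1 + lam ^ 2) * y.1) / (1 + lam ^ 2 + 2 * lam * y.1),
   ((1 - lam ^ 2) * y.2) / (1 + lam ^ 2 + 2 * lam * y.1))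

/-! On the unit circle, with `b (1 + λ) = 1 - λ`, the numerators and the common denominator of
`M(S x; λ)` are `(1 + λ)²` times those of `S(x₁, b x₂) / (x₁² + b² x₂²)`, which is `S(L(x; b))`
because `S` is homogeneous of degree 2. -/

theorem circSquare_smul (c : ℝ) (x : ℝ × ℝ) : circSquare (c • x) = c ^ 2 • circSquare x := by
  simp only [circSquare, Prod.smul_fst, Prod.smul_snd, Prod.smul_mk, smul_eq_mul]
  ext <;> ring

theorem rescaledLinear_eq_smul (x : ℝ × ℝ) (b : ℝ) :
    rescaledLinear x b = (Real.sqrt (x.1 ^ 2 + b ^ 2 * x.2 ^ 2))⁻¹ • (x.1, b * x.2) := by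
  simp only [rescaledLinear, Prod.smul_mk, smul_eq_mul, div_eq_inv_mul]

theorem circSquare_rescaledLinear (x : ℝ × ℝ) (b : ℝ) :
    circSquare (rescaledLinear x b) =
      (x.1 ^ 2 + b ^ 2 * x.2 ^ 2)⁻¹ • circSquare (x.1, b * x.2) := by
  rw [rescaledLinear_eq_smul, circSquare_smul, inv_pow, Real.sq_sqrt (by positivity)]

section

variable {lam b : ℝ} (hb : b * (1 + lam) = 1 - lam) {x : ℝ × ℝ}
include hb

theorem diagMobius_denom_circSquare (hx : x.1 ^ 2 + x.2 ^ 2 = 1) :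
    1 + lam ^ 2 + 2 * lam * (circSquare x).1 = (1 + lam) ^ 2 * (x.1 ^ 2 + b ^ 2 * x.2 ^ 2) := by
  simp only [circSquare]
  linear_combination -(1 + lam ^ 2) * hx - x.2 ^ 2 * (b * (1 + lam) + (1 - lam)) * hb

theorem diagMobius_numer_fst_circSquare (hx : x.1 ^ 2 + x.2 ^ 2 = 1) :
    2 * lam + (1 + lam ^ 2) * (circSquare x).1 = (1 + lam) ^ 2 * (circSquare (x.1, b * x.2)).1 := by
  simp only [circSquare]
  linear_combination -2 * lam * hx + x.2 ^ 2 * (b * (1 + lam) + (1 - lam)) * hb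

theorem diagMobius_numer_snd_circSquare :
    (1 - lam ^ 2) * (circSquare x).2 = (1 + lam) ^ 2 * (circSquare (x.1, b * x.2)).2 := by
  simp only [circSquare]
  linear_combination -2 * x.1 * x.2 * (1 + lam) * hb

theorem diagMobius_circSquare (hlam : 1 + lam ≠ 0) (hx : x.1 ^ 2 + x.2 ^ 2 = 1) :
    diagMobius (circSquare x) lam = circSquare (rescaledLinear x b) := by
  have hlam2 : (1 + lam) ^ 2 ≠ 0 := pow_ne_zero 2 hlam
  rw [circSquare_rescaledLinear]
  ext
  · rw [diagMobius, diagMobius_denom_circSquare hb hx, diagMobius_numer_fst_circSquare hb hx,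
      mul_div_mul_left _ _ hlam2, Prod.smul_fst, smul_eq_mul, inv_mul_eq_div]
  · rw [diagMobius, diagMobius_denom_circSquare hb hx, diagMobius_numer_snd_circSquare hb,
      mul_div_mul_left _ _ hlam2, Prod.smul_snd, smul_eq_mul, inv_mul_eq_div]

end

theorem fundamental_diag_mobius_identity_general (lam : ℝ) (h0 : 0 < lam)
    (b : ℝ) (hb : b = (1 - lam) / (1 + lam))
    (x : ℝ × ℝ) (hx : x.1 ^ 2 + x.2 ^ 2 = 1) :
    diagMobius (circSquare x) lam = circSquare (rescaledLinear x b) := by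
  have hlam : 1 + lam ≠ 0 := by positivity
  exact diagMobius_circSquare (by rw [hb, div_mul_cancel₀ _ hlam]) hlam hx

theorem fundamental_diag_mobius_identity (lam : ℝ) (h0 : 0 < lam) (h1 : lam < 1)
    (b : ℝ) (hb : b = (1 - lam) / (1 + lam))
    (x : ℝ × ℝ) (hx : x.1 ^ 2 + x.2 ^ 2 = 1) :
    diagMobius (circSquare x) lam = circSquare (rescaledLinear x b) :=
  fundamental_diag_mobius_identity_general lam h0 b hb x hx
end

section
/- Let q ≥ 2, 0 ≤ λ < 1, and μ₀ = (μ₁, μ₂ᵀ)ᵀ ∈ ℝ^q a unit vector. For 0 ≤ φ < π/2, θ = 2φ, r = tan φ, unit vector u ∈ ℝ^{q-1}, and v = r·u, one has 1+λ² - 2λ(μ₁ cos θ + (uᵀμ₂) sin θ) = (γ*/(1+r²))·(1 + ‖v - m‖²/σ²), where δ = 1+λ²+2λμ₁, γ* = (1+λ²-2λμ₁) - (4λ²/δ)μ₂ᵀμ₂ = (1-λ²)²/δ, m = (2λ/δ)μ₂, σ = (1-λ²)/δ. -/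
open Matrix

theorem sphericalCauchy_stereographic_form (n : ℕ)
    (lam : ℝ) (h0 : 0 ≤ lam) (h1 : lam < 1)
    (μ₁ : ℝ) (μ₂ : Fin n → ℝ) (hμ : μ₁ ^ 2 + μ₂ ⬝ᵥ μ₂ = 1)
    (u : Fin n → ℝ) (hu : u ⬝ᵥ u = 1)
    (φ θ r : ℝ) (hφ0 : 0 ≤ φ) (hφ1 : φ < Real.pi / 2)
    (hθ : θ = 2 * φ) (hr : r = Real.tan φ)
    (v m : Fin n → ℝ) (hv : v = r • u)
    (δ γstar σ : ℝ) (hδ : δ = 1 + lam ^ 2 + 2 * lam * μ₁)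
    (hγstar : γstar = (1 + lam ^ 2 - 2 * lam * μ₁) - (4 * lam ^ 2 / δ) * (μ₂ ⬝ᵥ μ₂))
    (hm : m = (2 * lam / δ) • μ₂) (hσ : σ = (1 - lam ^ 2) / δ) :
    γstar = (1 - lam ^ 2) ^ 2 / δ ∧
      1 + lam ^ 2 - 2 * lam * (μ₁ * Real.cos θ + (u ⬝ᵥ μ₂) * Real.sin θ) =
        (γstar / (1 + r ^ 2)) * (1 + ((v - m) ⬝ᵥ (v - m)) / σ ^ 2) := by
  have hnn : 0 ≤ μ₂ ⬝ᵥ μ₂ := Finset.sum_nonneg fun i _ => mul_self_nonneg _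
  have hμ1 : μ₁ ^ 2 ≤ 1 := by nlinarith
  have hμ1' : -1 ≤ μ₁ := by nlinarith
  have hδpos : 0 < δ := by nlinarith
  have hδ0 : δ ≠ 0 := ne_of_gt hδpos
  have hlam2 : (1 : ℝ) - lam ^ 2 ≠ 0 := by nlinarith
  have hb : μ₂ ⬝ᵥ μ₂ = 1 - μ₁ ^ 2 := by linarith
  have hc : 0 < Real.cos φ := Real.cos_pos_of_mem_Ioo ⟨by linarith [Real.pi_pos], hφ1⟩
  have hc0 : Real.cos φ ≠ 0 := ne_of_gt hc
  have hpyth := Real.sin_sq_add_cos_sq φ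
  have hr2 : 1 + r ^ 2 = 1 / Real.cos φ ^ 2 := by
    rw [hr, Real.tan_eq_sin_div_cos]
    field_simp
    linarith
  have hr2pos : (0 : ℝ) < 1 + r ^ 2 := by positivity
  have hcos : Real.cos θ = (1 - r ^ 2) / (1 + r ^ 2) := by
    rw [hθ, Real.cos_two_mul', hr, Real.tan_eq_sin_div_cos]
    field_simp
    linear_combination (Real.cos φ ^ 2 - Real.sin φ ^ 2) * hpyth
  have hsin : Real.sin θ = 2 * r / (1 + r ^ 2) := by
    rw [hθ, Real.sin_two_mul, hr, Real.tan_eq_sin_div_cos]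
    field_simp
    ring_nf
    linear_combination Real.sin φ * hpyth
  have hγ : γstar = (1 - lam ^ 2) ^ 2 / δ := by
    rw [hγstar, hb, eq_div_iff hδ0]
    field_simp
    rw [hδ]
    ring
  refine ⟨hγ, ?_⟩
  have hdot : (v - m) ⬝ᵥ (v - m) =
      r ^ 2 - 2 * r * (2 * lam / δ) * (u ⬝ᵥ μ₂) + (2 * lam / δ) ^ 2 * (μ₂ ⬝ᵥ μ₂) := by
    rw [hv, hm]
    simp [dotProduct_sub, sub_dotProduct, smul_dotProduct, dotProduct_smul, hu,
      dotProduct_comm μ₂ u]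
    ring
  rw [hγ, hdot, hcos, hsin, hσ, hδ, hb]
  have hδ0' : (1 : ℝ) + lam ^ 2 + 2 * lam * μ₁ ≠ 0 := by rw [← hδ]; exact hδ0
  have hδ0'' : (1 : ℝ) + lam ^ 2 + lam * 2 * μ₁ ≠ 0 := by rw [mul_comm lam 2]; exact hδ0'
  field_simp
  ring
end
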